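/- Let A and B be n×n nonnegative irreducible real matrices. Then there exists t ∈ (0,1) with r(A^{(1−t)} ∘ B^{(t)}) = r(A)^{1−t} · r(B)^{t} if and only if there exists a diagonal matrix E with strictly positive diagonal entries such that B = (r(B)/r(A)) · E^{−1} A E; and in that case the equality r(A^{(1−t)} ∘ B^{(t)}) = r(A)^{1−t} · r(B)^{t} holds for all t ∈ [0,1]. -/

import Mathlib

open Matrix

/-- Spectral radius of a real square matrix: the maximum modulus of its complex
eigenvalues. -/
noncomputable def specRad {n : ℕ} (A : Matrix (Fin n) (Fin n) ℝ) : ℝ :=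
  sSup {x : ℝ | ∃ μ ∈ spectrum ℂ (A.map Complex.ofReal), x = ‖μ‖}

/-- A nonnegative matrix is irreducible if for every pair (i,j) some power has a
positive (i,j) entry. -/
def MatIrred {n : ℕ} (A : Matrix (Fin n) (Fin n) ℝ) : Prop :=
  ∀ i j : Fin n, ∃ m : ℕ, 0 < m ∧ 0 < (A ^ m) i j

/-- For a real diagonal matrix D = diag d, `expDiag d` is diag (exp d). -/
noncomputable def expDiag {n : ℕ} (d : Fin n → ℝ) : Matrix (Fin n) (Fin n) ℝ :=
  Matrix.diagonal fun i => Real.exp (d i)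

/-- Property 1: equality in the log-convexity inequality forces C - D to be scalar. -/
def Property1 {n : ℕ} (A : Matrix (Fin n) (Fin n) ℝ) : Prop :=
  ∀ C D : Fin n → ℝ, ∀ t ∈ Set.Ioo (0:ℝ) 1,
    Real.log (specRad (expDiag (fun i => (1 - t) * C i + t * D i) * A)) =
      (1 - t) * Real.log (specRad (expDiag C * A)) +
        t * Real.log (specRad (expDiag D * A)) →
    ∃ c : ℝ, ∀ i, C i - D i = c

/-
Normalise by Perron vectors: if `A v = r(A) v` and `B u = r(B) u` with `v, u > 0`, then
`a = r(A)⁻¹ D_v⁻¹ A D_v` and `b = r(B)⁻¹ D_u⁻¹ B D_u` are row stochastic, and with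
`d = v^(1-t) u^t` the matrix `A^(1-t) ∘ B^(t)` is `r(A)^(1-t) r(B)^t D_d (a^(1-t) ∘ b^(t)) D_d⁻¹`.
If its spectral radius is `r(A)^(1-t) r(B)^t`, an eigenvector `z` for an eigenvalue of maximal
modulus gives `w = D_d⁻¹ |z| ≥ 0` with `w ≤ (a^(1-t) ∘ b^(t)) w`. Row by row, weighted AM-GM
bounds the row sums of `a^(1-t) ∘ b^(t)` by `1`, so at a maximal entry of `w` the row sum is `1`,
the rows of `a` and `b` coincide, and the maximum passes to every `j` with `a i j > 0`.
Irreducibility spreads this to all rows, so `a = b`, i.e. `B = (r(B)/r(A)) E⁻¹ A E` with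
`E = D_v D_u⁻¹`. Conversely, for such `B` the matrix `A^(1-t) ∘ B^(t)` is
`(r(B)/r(A))^t E^(-t) A E^t`, whose Perron vector `E^(-t) v` has eigenvalue `r(A)^(1-t) r(B)^t`.
-/

open Finset

namespace Matrix

variable {ι : Type*} [Fintype ι]

theorem mulVec_nonneg {M : Matrix ι ι ℝ} (hM : ∀ i j, 0 ≤ M i j) {v : ι → ℝ}
    (hv : ∀ i, 0 ≤ v i) (i : ι) : 0 ≤ (M *ᵥ v) i :=
  sum_nonneg fun j _ => mul_nonneg (hM i j) (hv j)

theorem mulVec_pos {P : Matrix ι ι ℝ} (hP : ∀ i j, 0 < P i j) {x : ι → ℝ}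
    (hx0 : ∀ i, 0 ≤ x i) (hx : x ≠ 0) (i : ι) : 0 < (P *ᵥ x) i := by
  obtain ⟨j, hj⟩ := Function.ne_iff.1 hx
  exact sum_pos' (fun k _ => mul_nonneg (hP i k).le (hx0 k))
    ⟨j, mem_univ j, mul_pos (hP i j) ((hx0 j).lt_of_ne' hj)⟩

theorem exists_pos_of_mul_apply_pos {M N : Matrix ι ι ℝ}
    (hM : ∀ i j, 0 ≤ M i j) {i j : ι} (h : 0 < (M * N) i j) :
    ∃ k, 0 < M i k ∧ 0 < N k j := by
  obtain ⟨k, -, hk⟩ := exists_lt_of_sum_lt (s := univ) (f := fun _ => 0)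
    (g := fun k => M i k * N k j) (by simpa [Matrix.mul_apply] using h)
  exact ⟨k, ((pos_and_pos_or_neg_and_neg_of_mul_pos hk).resolve_right
    fun h => (hM i k).not_gt h.1)⟩

theorem mem_spectrum_iff_exists_mulVec_eq [DecidableEq ι] {M : Matrix ι ι ℂ} {μ : ℂ} :
    μ ∈ spectrum ℂ M ↔ ∃ z ≠ 0, M *ᵥ z = μ • z := by
  rw [← Matrix.spectrum_toLin', ← Module.End.hasEigenvalue_iff_mem_spectrum]
  constructor
  · intro h
    obtain ⟨z, hz⟩ := h.exists_hasEigenvector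
    exact ⟨z, hz.2, by simpa using hz.apply_eq_smul⟩
  · rintro ⟨z, hz0, hz⟩
    exact Module.End.hasEigenvalue_of_hasEigenvector ⟨by simpa using hz, hz0⟩

theorem norm_mul_norm_le_sum {M : Matrix ι ι ℝ} (hM : ∀ i j, 0 ≤ M i j) {μ : ℂ}
    {z : ι → ℂ} (hz : M.map Complex.ofReal *ᵥ z = μ • z) (i : ι) :
    ‖μ‖ * ‖z i‖ ≤ ∑ j, M i j * ‖z j‖ :=
  calc ‖μ‖ * ‖z i‖ = ‖∑ j, (M i j : ℂ) * z j‖ := by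
        rw [← norm_mul, ← smul_eq_mul, ← Pi.smul_apply, ← hz]; rfl
    _ ≤ ∑ j, ‖(M i j : ℂ) * z j‖ := norm_sum_le _ _
    _ = ∑ j, M i j * ‖z j‖ := by simp [abs_of_nonneg (hM _ _)]

theorem norm_le_of_mulVec_le [DecidableEq ι] {M : Matrix ι ι ℝ} (hM : ∀ i j, 0 ≤ M i j)
    {v : ι → ℝ} (hv : ∀ i, 0 < v i) {r : ℝ} (hMv : ∀ i, (M *ᵥ v) i ≤ r * v i) {μ : ℂ}
    (hμ : μ ∈ spectrum ℂ (M.map Complex.ofReal)) : ‖μ‖ ≤ r := by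
  obtain ⟨z, hz, hμz⟩ := mem_spectrum_iff_exists_mulVec_eq.1 hμ
  obtain ⟨j, hj⟩ := Function.ne_iff.1 hz
  obtain ⟨i, -, hi⟩ := exists_max_image univ (fun i => ‖z i‖ / v i) ⟨j, mem_univ j⟩
  set q := ‖z i‖ / v i
  have hq : ∀ k, ‖z k‖ ≤ q * v k := fun k => (div_le_iff₀ (hv k)).1 (hi k (mem_univ k))
  have hzi : 0 < ‖z i‖ := by
    have : 0 < ‖z j‖ / v j := div_pos (norm_pos_iff.2 hj) (hv j)
    exact (div_pos_iff_of_pos_right (hv i)).1 (this.trans_le (hi j (mem_univ j)))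
  refine le_of_mul_le_mul_right ?_ hzi
  calc ‖μ‖ * ‖z i‖ ≤ ∑ k, M i k * ‖z k‖ := norm_mul_norm_le_sum hM hμz i
    _ ≤ ∑ k, M i k * (q * v k) := by gcongr with k; exacts [hM i k, hq k]
    _ = q * (M *ᵥ v) i := by
        simp only [Matrix.mulVec, dotProduct, mul_sum]; exact sum_congr rfl fun k _ => by ring
    _ ≤ q * (r * v i) := mul_le_mul_of_nonneg_left (hMv i) (div_pos hzi (hv i)).le
    _ = r * ‖z i‖ := by simp only [q]; field_simp [(hv i).ne']

theorem le_sum_sum_of_smul_le_mulVec {A : Matrix ι ι ℝ} (hA : ∀ i j, 0 ≤ A i j) {ρ : ℝ}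
    {x : ι → ℝ} (hx : x ∈ stdSimplex ℝ ι) (h : ∀ i, ρ * x i ≤ (A *ᵥ x) i) :
    ρ ≤ ∑ i, ∑ j, A i j :=
  calc ρ = ∑ i, ρ * x i := by rw [← mul_sum, hx.2, mul_one]
    _ ≤ ∑ i, (A *ᵥ x) i := sum_le_sum fun i _ => h i
    _ ≤ ∑ i, ∑ j, A i j := sum_le_sum fun i _ => sum_le_sum fun j _ =>
        mul_le_of_le_one_right (hA i j) (mem_Icc_of_mem_stdSimplex hx j).2

theorem exists_gt_smul_le_mulVec {A P : Matrix ι ι ℝ} (hP : ∀ i j, 0 < P i j)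
    (hAP : Commute A P) {ρ : ℝ} {x : ι → ℝ} (hx0 : ∀ i, 0 ≤ x i) (hx : x ≠ 0)
    (h : ∀ i, ρ * x i ≤ (A *ᵥ x) i) (hne : A *ᵥ x ≠ ρ • x) :
    ∃ ρ' > ρ, ∃ y ∈ stdSimplex ℝ ι, ∀ i, ρ' * y i ≤ (A *ᵥ y) i := by
  obtain ⟨j, -⟩ := Function.ne_iff.1 hx
  set u := P *ᵥ x
  have hu : ∀ i, 0 < u i := mulVec_pos hP hx0 hx
  have hgap : ∀ i, ρ * u i < (A *ᵥ u) i := by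
    have hAu : A *ᵥ u - ρ • u = P *ᵥ (A *ᵥ x - ρ • x) := by
      rw [mulVec_sub, mulVec_smul, mulVec_mulVec, mulVec_mulVec, hAP.eq]
    intro i
    have := mulVec_pos hP (x := A *ᵥ x - ρ • x) (fun i => by simpa using h i)
      (sub_ne_zero.2 hne) i
    rw [← hAu] at this
    simpa using this
  set ρ' := univ.inf' ⟨j, mem_univ j⟩ fun i => (A *ᵥ u) i / u i
  have hρ' : ∀ i, ρ' * u i ≤ (A *ᵥ u) i := fun i =>
    (le_div_iff₀ (hu i)).1 (inf'_le _ (mem_univ i))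
  have hs : 0 < ∑ i, u i := sum_pos (fun i _ => hu i) ⟨j, mem_univ j⟩
  refine ⟨ρ', (lt_inf'_iff _).2 fun i _ => (lt_div_iff₀ (hu i)).2 (hgap i),
    (∑ i, u i)⁻¹ • u, ⟨fun i => ?_, ?_⟩, fun i => ?_⟩
  · exact smul_nonneg (inv_nonneg.2 hs.le) (hu i).le
  · simp [← mul_sum, hs.ne']
  · simp only [Pi.smul_apply, smul_eq_mul, mulVec_smul, mul_left_comm ρ']
    exact mul_le_mul_of_nonneg_left (hρ' i) (inv_nonneg.2 hs.le)

section DiagonalSimilarity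

variable [DecidableEq ι]

theorem inv_diagonal_of_ne_zero {E : ι → ℝ} (hE : ∀ i, E i ≠ 0) :
    (diagonal E)⁻¹ = diagonal E⁻¹ :=
  inv_eq_left_inv (by rw [diagonal_mul_diagonal]; simp [hE])

theorem smul_diagonal_conj_apply (c : ℝ) (E : ι → ℝ) (M : Matrix ι ι ℝ) (i j : ι) :
    (c • (diagonal E⁻¹ * M * diagonal E)) i j = c * (E i)⁻¹ * M i j * E j := by
  simp [diagonal_mul, mul_diagonal, mul_assoc]

theorem smul_diagonal_conj_mulVec (c : ℝ) {E : ι → ℝ} (hE : ∀ i, E i ≠ 0)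
    (M : Matrix ι ι ℝ) (x : ι → ℝ) :
    (c • (diagonal E⁻¹ * M * diagonal E)) *ᵥ (E⁻¹ * x) = c • (E⁻¹ * (M *ᵥ x)) := by
  have hEx : diagonal E *ᵥ (E⁻¹ * x) = x := funext fun i => by
    rw [mulVec_diagonal, Pi.mul_apply, Pi.inv_apply, mul_inv_cancel_left₀ (hE i)]
  ext i
  rw [smul_mulVec, ← mulVec_mulVec, hEx, ← mulVec_mulVec]
  simp only [Pi.smul_apply, mulVec_diagonal, Pi.mul_apply]

theorem mul_norm_le_smul_diagonal_conj_mulVec {M : Matrix ι ι ℝ} (hM : ∀ i j, 0 ≤ M i j)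
    {μ : ℂ} {z : ι → ℂ} (hz : M.map Complex.ofReal *ᵥ z = μ • z) {c : ℝ} (hc : 0 ≤ c)
    {E : ι → ℝ} (hE : ∀ i, 0 < E i) (i : ι) :
    c * ‖μ‖ * (E⁻¹ * fun j => ‖z j‖) i ≤
      ((c • (diagonal E⁻¹ * M * diagonal E)) *ᵥ (E⁻¹ * fun j => ‖z j‖)) i := by
  rw [smul_diagonal_conj_mulVec c (fun i => (hE i).ne')]
  have := hE i
  simp only [Pi.smul_apply, Pi.mul_apply, Pi.inv_apply, smul_eq_mul]
  calc c * ‖μ‖ * ((E i)⁻¹ * ‖z i‖) = c * (E i)⁻¹ * (‖μ‖ * ‖z i‖) := by ring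
    _ ≤ c * (E i)⁻¹ * (M *ᵥ fun j => ‖z j‖) i := by
        gcongr; exact norm_mul_norm_le_sum hM hz i
    _ = _ := by ring

theorem smul_diagonal_conj_mem_rowStochastic {A : Matrix ι ι ℝ} (hA : ∀ i j, 0 ≤ A i j)
    {v : ι → ℝ} (hv : ∀ i, 0 < v i) {r : ℝ} (hr : 0 < r) (hAv : A *ᵥ v = r • v) :
    r⁻¹ • (diagonal v⁻¹ * A * diagonal v) ∈ rowStochastic ℝ ι := by
  refine ⟨fun i j => ?_, ?_⟩
  · rw [smul_diagonal_conj_apply]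
    have := hv i; have := hv j; have := hA i j
    positivity
  · have hv1 : v⁻¹ * v = 1 := funext fun i => inv_mul_cancel₀ (hv i).ne'
    rw [← hv1, smul_diagonal_conj_mulVec _ (fun i => (hv i).ne'), hAv, mul_smul_comm, smul_smul,
      inv_mul_cancel₀ hr.ne', one_smul]

theorem eq_smul_diagonal_conj_of_smul_diagonal_conj_eq {A B : Matrix ι ι ℝ} {v u : ι → ℝ}
    (hv : ∀ i, 0 < v i) (hu : ∀ i, 0 < u i) {r s : ℝ} (hr : r ≠ 0) (hs : s ≠ 0)
    (h : r⁻¹ • (diagonal v⁻¹ * A * diagonal v) = s⁻¹ • (diagonal u⁻¹ * B * diagonal u)) :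
    B = (s / r) • (diagonal (v * u⁻¹)⁻¹ * A * diagonal (v * u⁻¹)) := by
  ext i j
  have hij := congrFun (congrFun h i) j
  simp only [smul_diagonal_conj_apply, Pi.mul_apply, Pi.inv_apply] at hij ⊢
  have := hv i; have := hv j; have := hu i; have := hu j
  field_simp at hij ⊢
  linear_combination -hij

end DiagonalSimilarity

end Matrix

section SpectralRadius

variable {n : ℕ}

theorem specRad_eq_sSup_image (M : Matrix (Fin n) (Fin n) ℝ) :
    specRad M = sSup ((‖·‖) '' spectrum ℂ (M.map Complex.ofReal)) := by
  simp only [specRad, Set.image, eq_comm]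

theorem specRad_fin_zero (M : Matrix (Fin 0) (Fin 0) ℝ) : specRad M = 0 := by
  rw [specRad_eq_sSup_image, spectrum.of_subsingleton, Set.image_empty, Real.sSup_empty]

theorem specRad_nonneg (M : Matrix (Fin n) (Fin n) ℝ) : 0 ≤ specRad M :=
  Real.sSup_nonneg fun _ ⟨_, _, hx⟩ => hx ▸ norm_nonneg _

theorem exists_mem_spectrum_norm_eq_specRad [NeZero n] (M : Matrix (Fin n) (Fin n) ℝ) :
    ∃ μ ∈ spectrum ℂ (M.map Complex.ofReal), ‖μ‖ = specRad M := by
  rw [specRad_eq_sSup_image]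
  exact ((spectrum.nonempty_of_isAlgClosed_of_finiteDimensional ℂ _).image _).csSup_mem
    ((Matrix.finite_spectrum _).image _)

theorem specRad_eq_of_mulVec_eq [NeZero n] {M : Matrix (Fin n) (Fin n) ℝ}
    (hM : ∀ i j, 0 ≤ M i j) {v : Fin n → ℝ} (hv : ∀ i, 0 < v i) {r : ℝ}
    (hMv : M *ᵥ v = r • v) : specRad M = r := by
  have hr : 0 ≤ r := by
    have h0 := Matrix.mulVec_nonneg hM (fun i => (hv i).le) 0
    rw [hMv, Pi.smul_apply, smul_eq_mul] at h0
    exact nonneg_of_mul_nonneg_left h0 (hv 0)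
  refine IsGreatest.csSup_eq ⟨⟨r, ?_, by simp [abs_of_nonneg hr]⟩, ?_⟩
  · refine Matrix.mem_spectrum_iff_exists_mulVec_eq.2 ⟨fun i => v i, ?_, ?_⟩
    · exact fun h => (hv 0).ne' (by simpa using congrFun h 0)
    · ext i
      simpa [Matrix.mulVec, dotProduct] using congrArg Complex.ofReal (congrFun hMv i)
  · rintro _ ⟨μ, hμ, rfl⟩
    exact Matrix.norm_le_of_mulVec_le hM hv (fun i => (congrFun hMv i).le) hμ

theorem specRad_smul_diagonal_conj [NeZero n] {A : Matrix (Fin n) (Fin n) ℝ}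
    (hA : ∀ i j, 0 ≤ A i j) {v : Fin n → ℝ} (hv : ∀ i, 0 < v i) {r : ℝ} (hAv : A *ᵥ v = r • v)
    {c : ℝ} (hc : 0 ≤ c) {E : Fin n → ℝ} (hE : ∀ i, 0 < E i) :
    specRad (c • (diagonal E⁻¹ * A * diagonal E)) = c * r := by
  refine specRad_eq_of_mulVec_eq (v := E⁻¹ * v) (fun i j => ?_) (fun i => ?_) ?_
  · rw [smul_diagonal_conj_apply]
    have := hE i; have := hE j; have := hA i j
    positivity
  · have := hE i; have := hv i
    simp only [Pi.mul_apply, Pi.inv_apply]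
    positivity
  · rw [smul_diagonal_conj_mulVec _ (fun i => (hE i).ne'), hAv, mul_smul_comm, smul_smul]

end SpectralRadius

namespace MatIrred

variable {n : ℕ} {A : Matrix (Fin n) (Fin n) ℝ}

theorem forall_of_closed (hirr : MatIrred A) (hA : ∀ i j, 0 ≤ A i j)
    {p : Fin n → Prop} (hp : ∀ i j, p i → 0 < A i j → p j) {i : Fin n} (hi : p i) (j : Fin n) :
    p j := by
  obtain ⟨m, -, hm⟩ := hirr i j
  induction m generalizing j with
  | zero =>
    obtain rfl : i = j := by by_contra h; simp [Matrix.one_apply_ne h] at hm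
    exact hi
  | succ m ih =>
    rw [pow_succ] at hm
    obtain ⟨k, hik, hkj⟩ := Matrix.exists_pos_of_mul_apply_pos (Matrix.pow_apply_nonneg hA m) hm
    exact hp k j (ih k hik) hkj

theorem of_pos_imp (hirr : MatIrred A) (hA : ∀ i j, 0 ≤ A i j) {B : Matrix (Fin n) (Fin n) ℝ}
    (hB : ∀ i j, 0 ≤ B i j) (hAB : ∀ i j, 0 < A i j → 0 < B i j) : MatIrred B := by
  intro i j
  obtain ⟨m, hm0, hm⟩ := hirr i j
  refine ⟨m, hm0, ?_⟩
  clear hm0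
  induction m generalizing j with
  | zero => simpa using hm
  | succ m ih =>
    rw [pow_succ] at hm ⊢
    obtain ⟨k, hik, hkj⟩ := Matrix.exists_pos_of_mul_apply_pos (Matrix.pow_apply_nonneg hA m) hm
    rw [Matrix.mul_apply]
    exact (mul_pos (ih k hik) (hAB k j hkj)).trans_le
      (single_le_sum (f := fun l => (B ^ m) i l * B l j)
        (fun l _ => mul_nonneg (Matrix.pow_apply_nonneg hB m i l) (hB l j)) (mem_univ k))

theorem exists_pos [NeZero n] (hirr : MatIrred A) (hA : ∀ i j, 0 ≤ A i j) :
    ∃ i j, 0 < A i j := by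
  by_contra! h
  obtain ⟨m, hm0, hm⟩ := hirr 0 0
  have : A = 0 := Matrix.ext fun i j => le_antisymm (h i j) (hA i j)
  simp [this, zero_pow hm0.ne'] at hm

theorem exists_pos_sum_pow (hirr : MatIrred A) (hA : ∀ i j, 0 ≤ A i j) :
    ∃ N, ∀ i j, 0 < (∑ k ∈ range N, A ^ k) i j := by
  choose m _ hm using hirr
  refine ⟨univ.sup (fun p : Fin n × Fin n => m p.1 p.2) + 1, fun i j => ?_⟩
  rw [Matrix.sum_apply]
  refine (hm i j).trans_le (single_le_sum (fun k _ => Matrix.pow_apply_nonneg hA k i j) ?_)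
  exact mem_range.2 (Nat.lt_succ_of_le (le_sup (f := fun p : Fin n × Fin n => m p.1 p.2)
    (mem_univ (i, j))))

theorem pos_of_mulVec_eq_smul (hirr : MatIrred A) (hA : ∀ i j, 0 ≤ A i j) {ρ : ℝ}
    {v : Fin n → ℝ} (hv0 : ∀ i, 0 ≤ v i) (hv : v ≠ 0) (hAv : A *ᵥ v = ρ • v) (i : Fin n) :
    0 < v i := by
  obtain ⟨j, hj⟩ := Function.ne_iff.1 hv
  refine (hv0 i).lt_of_ne' fun hi => hj (hirr.forall_of_closed hA (p := (v · = 0)) ?_ hi j)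
  intro k l hk hkl
  have hsum : ∑ m, A k m * v m = 0 := by
    simpa [hk, Matrix.mulVec, dotProduct] using congrFun hAv k
  have := (sum_eq_zero_iff_of_nonneg fun m _ => mul_nonneg (hA k m) (hv0 m)).1 hsum l (mem_univ l)
  exact (mul_eq_zero.1 this).resolve_left hkl.ne'

theorem scalar_pos_of_mulVec_eq_smul [NeZero n] (hirr : MatIrred A) (hA : ∀ i j, 0 ≤ A i j)
    {ρ : ℝ} {v : Fin n → ℝ} (hv : ∀ i, 0 < v i) (hAv : A *ᵥ v = ρ • v) : 0 < ρ := by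
  obtain ⟨i, j, hij⟩ := hirr.exists_pos hA
  have : 0 < (A *ᵥ v) i := sum_pos' (fun k _ => mul_nonneg (hA i k) (hv k).le)
    ⟨j, mem_univ j, mul_pos hij (hv j)⟩
  rw [hAv, Pi.smul_apply, smul_eq_mul] at this
  exact pos_of_mul_pos_left this (hv i).le

-- Perron–Frobenius: maximise `ρ` over the compact set of pairs `(ρ, x)` with `x` in the standard
-- simplex and `ρ x ≤ A x`.
theorem exists_pos_mulVec_eq_specRad [NeZero n] (hirr : MatIrred A) (hA : ∀ i j, 0 ≤ A i j) :
    ∃ v : Fin n → ℝ, (∀ i, 0 < v i) ∧ A *ᵥ v = specRad A • v ∧ 0 < specRad A := by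
  obtain ⟨N, hP⟩ := hirr.exists_pos_sum_pow hA
  set K := (Set.Icc 0 (∑ i, ∑ j, A i j) ×ˢ stdSimplex ℝ (Fin n)) ∩
    {p | ∀ i, p.1 * p.2 i ≤ (A *ᵥ p.2) i}
  have hK : IsCompact K := by
    refine (isCompact_Icc.prod (isCompact_stdSimplex _ _)).inter_right ?_
    simp only [Set.ofPred_forall]
    exact isClosed_iInter fun i => isClosed_le (by fun_prop) (by fun_prop)
  have hK0 : (0, Pi.single 0 1) ∈ K :=
    ⟨⟨⟨le_rfl, sum_nonneg fun i _ => sum_nonneg fun j _ => hA i j⟩, single_mem_stdSimplex _ _⟩,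
      fun i => by simpa using Matrix.mulVec_nonneg hA (single_mem_stdSimplex ℝ 0).1 i⟩
  obtain ⟨⟨ρ, v⟩, ⟨⟨hρ, hv⟩, hρv⟩, hmax⟩ :=
    hK.exists_isMaxOn ⟨_, hK0⟩ continuous_fst.continuousOn
  have hv0 : v ≠ 0 := fun h => by simpa [h] using hv.2
  have heig : A *ᵥ v = ρ • v := by
    by_contra hne
    obtain ⟨ρ', hρ', y, hy, hρy⟩ := Matrix.exists_gt_smul_le_mulVec hP
      ((Commute.sum_right _ _ _ fun k _ => Commute.self_pow A k)) hv.1 hv0 hρv hne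
    exact hρ'.not_ge (isMaxOn_iff.1 hmax (ρ', y)
      ⟨⟨⟨hρ.1.trans hρ'.le, Matrix.le_sum_sum_of_smul_le_mulVec hA hy hρy⟩, hy⟩, hρy⟩)
  have hvpos := hirr.pos_of_mulVec_eq_smul hA hv.1 hv0 heig
  rw [specRad_eq_of_mulVec_eq hA hvpos heig]
  exact ⟨v, hvpos, heig, hirr.scalar_pos_of_mulVec_eq_smul hA hvpos heig⟩

end MatIrred

section MeanInequality

variable {ι : Type*} [Fintype ι] {t : ℝ}

theorem Real.rpow_one_sub_mul_rpow_self {x : ℝ} (hx : 0 ≤ x) (t : ℝ) :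
    x ^ (1 - t) * x ^ t = x := by
  rw [← Real.rpow_add' hx (by norm_num), sub_add_cancel, Real.rpow_one]

theorem Real.eq_of_rpow_one_sub_mul_rpow_eq (ht : t ∈ Set.Ioo 0 1) {x y : ℝ} (hx : 0 ≤ x)
    (hy : 0 ≤ y) (h : x ^ (1 - t) * y ^ t = (1 - t) * x + t * y) : x = y := by
  have := (Real.geom_mean_eq_arith_mean_weighted_iff_of_nonneg (s := univ) ![1 - t, t] ![x, y]
    (by simp [Fin.forall_fin_two, ht.1.le, ht.2.le]) (by simp [Fin.sum_univ_two])
    (by simp [Fin.forall_fin_two, hx, hy])).1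
      (by simpa [Fin.prod_univ_two, Fin.sum_univ_two] using h)
    0 (mem_univ _) (by simp [sub_eq_zero, ht.2.ne']) 1 (mem_univ _) (by simp [ht.1.ne'])
  simpa using this

theorem Real.mul_inv_mul_mul_rpow {c e a e' : ℝ} (hc : 0 ≤ c) (he : 0 < e) (ha : 0 ≤ a)
    (he' : 0 < e') (s : ℝ) : (c * e⁻¹ * a * e') ^ s = c ^ s * (e ^ s)⁻¹ * a ^ s * e' ^ s := by
  rw [Real.mul_rpow (by positivity) he'.le, Real.mul_rpow (by positivity) ha,
    Real.mul_rpow hc (inv_nonneg.2 he.le), Real.inv_rpow he.le]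

theorem sum_rpow_one_sub_mul_rpow_le_one (ht : t ∈ Set.Icc 0 1) {p q : ι → ℝ}
    (hp : ∀ i, 0 ≤ p i) (hq : ∀ i, 0 ≤ q i) (hp1 : ∑ i, p i = 1) (hq1 : ∑ i, q i = 1) :
    ∑ i, p i ^ (1 - t) * q i ^ t ≤ 1 :=
  calc ∑ i, p i ^ (1 - t) * q i ^ t ≤ ∑ i, ((1 - t) * p i + t * q i) := sum_le_sum fun i _ =>
        Real.geom_mean_le_arith_mean2_weighted (by linarith [ht.2]) ht.1 (hp i) (hq i) (by ring)
    _ = 1 := by rw [sum_add_distrib, ← mul_sum, ← mul_sum, hp1, hq1]; ring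

theorem eq_of_sum_rpow_one_sub_mul_rpow_eq_one (ht : t ∈ Set.Ioo 0 1) {p q : ι → ℝ}
    (hp : ∀ i, 0 ≤ p i) (hq : ∀ i, 0 ≤ q i) (hp1 : ∑ i, p i = 1) (hq1 : ∑ i, q i = 1)
    (h : ∑ i, p i ^ (1 - t) * q i ^ t = 1) : p = q := by
  have hgap : ∑ i, ((1 - t) * p i + t * q i - p i ^ (1 - t) * q i ^ t) = 0 := by
    rw [sum_sub_distrib, sum_add_distrib, ← mul_sum, ← mul_sum, hp1, hq1, h]; ring
  rw [sum_eq_zero_iff_of_nonneg fun i _ => sub_nonneg.2 <|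
    Real.geom_mean_le_arith_mean2_weighted (by linarith [ht.2]) ht.1.le (hp i) (hq i) (by ring)]
    at hgap
  exact funext fun i => Real.eq_of_rpow_one_sub_mul_rpow_eq ht (hp i) (hq i)
    (sub_eq_zero.1 (hgap i (mem_univ i))).symm

theorem sum_eq_one_and_eq_of_le_sum_mul {c w : ι → ℝ} {W : ℝ} (hc : ∀ j, 0 ≤ c j)
    (hc1 : ∑ j, c j ≤ 1) (hw : ∀ j, w j ≤ W) (hW : 0 < W) (h : W ≤ ∑ j, c j * w j) :
    ∑ j, c j = 1 ∧ ∀ j, 0 < c j → w j = W := by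
  have hle : ∑ j, c j * w j ≤ W * ∑ j, c j :=
    (sum_le_sum fun j _ => mul_le_mul_of_nonneg_left (hw j) (hc j)).trans_eq
      (by rw [mul_sum]; exact sum_congr rfl fun j _ => mul_comm _ _)
  have hsum : ∑ j, c j = 1 :=
    le_antisymm hc1 (le_of_mul_le_mul_left (by linarith [h.trans hle]) hW)
  refine ⟨hsum, fun j hj => ?_⟩
  have hgap : ∑ j, c j * (W - w j) = 0 := by
    rw [hsum, mul_one] at hle
    simp only [mul_sub, sum_sub_distrib, ← sum_mul, hsum]; linarith
  rw [sum_eq_zero_iff_of_nonneg fun j _ => mul_nonneg (hc j) (sub_nonneg.2 (hw j))] at hgap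
  linarith [(mul_eq_zero.1 (hgap j (mem_univ j))).resolve_left hj.ne']

end MeanInequality

noncomputable def logConvexComb {ι : Type*} (A B : Matrix ι ι ℝ) (t : ℝ) : Matrix ι ι ℝ :=
  of fun i j => A i j ^ (1 - t) * B i j ^ t

section

variable {ι : Type*} [Fintype ι] [DecidableEq ι]

theorem logConvexComb_smul_diagonal_conj {A B : Matrix ι ι ℝ} (hA : ∀ i j, 0 ≤ A i j)
    (hB : ∀ i j, 0 ≤ B i j) {c c' : ℝ} (hc : 0 ≤ c) (hc' : 0 ≤ c') {E E' : ι → ℝ}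
    (hE : ∀ i, 0 < E i) (hE' : ∀ i, 0 < E' i) (t : ℝ) :
    logConvexComb (c • (diagonal E⁻¹ * A * diagonal E)) (c' • (diagonal E'⁻¹ * B * diagonal E')) t
      = (c ^ (1 - t) * c' ^ t) • (diagonal (fun i => E i ^ (1 - t) * E' i ^ t)⁻¹ *
          logConvexComb A B t * diagonal (fun i => E i ^ (1 - t) * E' i ^ t)) := by
  ext i j
  simp only [logConvexComb, of_apply, smul_diagonal_conj_apply,
    Real.mul_inv_mul_mul_rpow hc (hE i) (hA i j) (hE j),
    Real.mul_inv_mul_mul_rpow hc' (hE' i) (hB i j) (hE' j)]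
  ring

theorem logConvexComb_self_smul_diagonal_conj {A : Matrix ι ι ℝ} (hA : ∀ i j, 0 ≤ A i j)
    {c : ℝ} (hc : 0 ≤ c) {E : ι → ℝ} (hE : ∀ i, 0 < E i) (t : ℝ) :
    logConvexComb A (c • (diagonal E⁻¹ * A * diagonal E)) t
      = c ^ t • (diagonal (fun i => E i ^ t)⁻¹ * A * diagonal (fun i => E i ^ t)) := by
  ext i j
  simp only [logConvexComb, of_apply, smul_diagonal_conj_apply,
    Real.mul_inv_mul_mul_rpow hc (hE i) (hA i j) (hE j)]
  linear_combination (c ^ t * (E i ^ t)⁻¹ * E j ^ t) * Real.rpow_one_sub_mul_rpow_self (hA i j) t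

end

theorem MatIrred.eq_of_le_logConvexComb_mulVec {n : ℕ} {a b : Matrix (Fin n) (Fin n) ℝ}
    (hirr : MatIrred a) (ha : a ∈ rowStochastic ℝ (Fin n)) (hb : b ∈ rowStochastic ℝ (Fin n))
    {t : ℝ} (ht : t ∈ Set.Ioo 0 1) {w : Fin n → ℝ} (hw0 : ∀ i, 0 ≤ w i) (hw : w ≠ 0)
    (hle : ∀ i, w i ≤ (logConvexComb a b t *ᵥ w) i) : a = b := by
  obtain ⟨j, hj⟩ := Function.ne_iff.1 hw
  obtain ⟨i₀, -, hi₀⟩ := exists_max_image univ w ⟨j, mem_univ j⟩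
  have hW : 0 < w i₀ := ((hw0 j).lt_of_ne' hj).trans_le (hi₀ j (mem_univ j))
  have hrow : ∀ i, w i = w i₀ → a i = b i ∧ ∀ j, 0 < a i j → w j = w i₀ := by
    intro i hi
    obtain ⟨hsum, hmax⟩ :=
      sum_eq_one_and_eq_of_le_sum_mul (c := fun j => a i j ^ (1 - t) * b i j ^ t)
      (fun j => mul_nonneg (Real.rpow_nonneg (ha.1 i j) _) (Real.rpow_nonneg (hb.1 i j) _))
      (sum_rpow_one_sub_mul_rpow_le_one (Set.Ioo_subset_Icc_self ht) (ha.1 i) (hb.1 i)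
        (sum_row_of_mem_rowStochastic ha i) (sum_row_of_mem_rowStochastic hb i))
      (fun j => hi₀ j (mem_univ j)) hW (hi ▸ hle i)
    have hab : a i = b i := eq_of_sum_rpow_one_sub_mul_rpow_eq_one ht (ha.1 i) (hb.1 i)
      (sum_row_of_mem_rowStochastic ha i) (sum_row_of_mem_rowStochastic hb i) hsum
    refine ⟨hab, fun j hj => hmax j ?_⟩
    rwa [← hab, Real.rpow_one_sub_mul_rpow_self (ha.1 i j)]
  have hall : ∀ i, w i = w i₀ :=
    hirr.forall_of_closed ha.1 (fun i j hi hij => (hrow i hi).2 j hij) rfl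
  exact funext fun i => (hrow i (hall i)).1

section

variable {n : ℕ} [NeZero n] {A B : Matrix (Fin n) (Fin n) ℝ}

theorem specRad_logConvexComb_of_eq_smul_diagonal_conj (hA : ∀ i j, 0 ≤ A i j)
    (hAirr : MatIrred A) {E : Fin n → ℝ} (hE : ∀ i, 0 < E i)
    (hB : B = (specRad B / specRad A) • ((diagonal E)⁻¹ * A * diagonal E)) (t : ℝ) :
    specRad (logConvexComb A B t) = specRad A ^ (1 - t) * specRad B ^ t := by
  obtain ⟨v, hv, hAv, hrA⟩ := hAirr.exists_pos_mulVec_eq_specRad hA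
  have hc : 0 ≤ specRad B / specRad A := div_nonneg (specRad_nonneg B) hrA.le
  rw [inv_diagonal_of_ne_zero fun i => (hE i).ne'] at hB
  have hC : logConvexComb A B t = (specRad B / specRad A) ^ t •
      (diagonal (fun i => E i ^ t)⁻¹ * A * diagonal (fun i => E i ^ t)) := by
    conv_lhs => rw [hB]
    exact logConvexComb_self_smul_diagonal_conj hA hc hE t
  rw [hC, specRad_smul_diagonal_conj hA hv hAv (Real.rpow_nonneg hc t)
    (fun i => Real.rpow_pos_of_pos (hE i) t), Real.div_rpow (specRad_nonneg B) hrA.le,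
    Real.rpow_sub hrA, Real.rpow_one]
  field_simp

theorem exists_eq_smul_diagonal_conj_of_specRad_logConvexComb_eq (hA : ∀ i j, 0 ≤ A i j)
    (hB : ∀ i j, 0 ≤ B i j) (hAirr : MatIrred A) (hBirr : MatIrred B) {t : ℝ}
    (ht : t ∈ Set.Ioo 0 1)
    (h : specRad (logConvexComb A B t) = specRad A ^ (1 - t) * specRad B ^ t) :
    ∃ E : Fin n → ℝ, (∀ i, 0 < E i) ∧
      B = (specRad B / specRad A) • ((diagonal E)⁻¹ * A * diagonal E) := by
  obtain ⟨v, hv, hAv, hrA⟩ := hAirr.exists_pos_mulVec_eq_specRad hA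
  obtain ⟨u, hu, hBu, hrB⟩ := hBirr.exists_pos_mulVec_eq_specRad hB
  set a := (specRad A)⁻¹ • (diagonal v⁻¹ * A * diagonal v)
  set b := (specRad B)⁻¹ • (diagonal u⁻¹ * B * diagonal u)
  have ha := smul_diagonal_conj_mem_rowStochastic hA hv hrA hAv
  have hb := smul_diagonal_conj_mem_rowStochastic hB hu hrB hBu
  have hirr : MatIrred a := hAirr.of_pos_imp hA ha.1 fun i j hij => by
    simp only [a, smul_diagonal_conj_apply]
    have := hv i; have := hv j
    positivity
  obtain ⟨μ, hμ, hμr⟩ := exists_mem_spectrum_norm_eq_specRad (logConvexComb A B t)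
  obtain ⟨z, hz, hμz⟩ := mem_spectrum_iff_exists_mulVec_eq.1 hμ
  set d : Fin n → ℝ := fun i => v i ^ (1 - t) * u i ^ t
  have hd : ∀ i, 0 < d i := fun i =>
    mul_pos (Real.rpow_pos_of_pos (hv i) _) (Real.rpow_pos_of_pos (hu i) _)
  have hab : a = b := by
    refine hirr.eq_of_le_logConvexComb_mulVec ha hb ht (w := d⁻¹ * fun i => ‖z i‖)
      (fun i => mul_nonneg (inv_nonneg.2 (hd i).le) (norm_nonneg _)) ?_ fun i => ?_
    · obtain ⟨j, hj⟩ := Function.ne_iff.1 hz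
      exact fun h0 => hj (by simpa [(hd j).ne'] using congrFun h0 j)
    · have hs : (specRad A)⁻¹ ^ (1 - t) * (specRad B)⁻¹ ^ t * ‖μ‖ = 1 := by
        rw [hμr, h, Real.inv_rpow hrA.le, Real.inv_rpow hrB.le]
        field_simp [(Real.rpow_pos_of_pos hrA (1 - t)).ne', (Real.rpow_pos_of_pos hrB t).ne']
      rw [logConvexComb_smul_diagonal_conj hA hB (inv_nonneg.2 hrA.le) (inv_nonneg.2 hrB.le) hv hu]
      refine le_of_eq_of_le ?_ (mul_norm_le_smul_diagonal_conj_mulVec (fun i j => mul_nonneg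
        (Real.rpow_nonneg (hA i j) _) (Real.rpow_nonneg (hB i j) _)) hμz (by positivity) hd i)
      rw [hs, one_mul]
  refine ⟨v * u⁻¹, fun i => mul_pos (hv i) (inv_pos.2 (hu i)), ?_⟩
  rw [inv_diagonal_of_ne_zero (E := v * u⁻¹) fun i => (mul_pos (hv i) (inv_pos.2 (hu i))).ne']
  exact eq_smul_diagonal_conj_of_smul_diagonal_conj_eq hv hu hrA.ne' hrB.ne' hab

end

theorem stmt3 {n : ℕ} (A B : Matrix (Fin n) (Fin n) ℝ)
    (hA : ∀ i j, 0 ≤ A i j) (hB : ∀ i j, 0 ≤ B i j)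
    (hAirr : MatIrred A) (hBirr : MatIrred B) :
    ((∃ t ∈ Set.Ioo (0:ℝ) 1,
        specRad (Matrix.of fun i j => A i j ^ (1 - t) * B i j ^ t) =
          specRad A ^ (1 - t) * specRad B ^ t) ↔
      ∃ E : Fin n → ℝ, (∀ i, 0 < E i) ∧
        B = (specRad B / specRad A) • ((Matrix.diagonal E)⁻¹ * A * Matrix.diagonal E)) ∧
    ((∃ E : Fin n → ℝ, (∀ i, 0 < E i) ∧
        B = (specRad B / specRad A) • ((Matrix.diagonal E)⁻¹ * A * Matrix.diagonal E)) →
      ∀ t ∈ Set.Icc (0:ℝ) 1,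
        specRad (Matrix.of fun i j => A i j ^ (1 - t) * B i j ^ t) =
          specRad A ^ (1 - t) * specRad B ^ t) := by
  rcases n.eq_zero_or_pos with rfl | hn
  · have hzero : ∀ t ∈ Set.Icc (0:ℝ) 1, (0:ℝ) ^ (1 - t) * 0 ^ t = 0 := fun t ht => by
      rcases ht.1.eq_or_lt with rfl | ht0
      · simp
      · rw [Real.zero_rpow ht0.ne', mul_zero]
    simp only [specRad_fin_zero]
    exact ⟨⟨fun _ => ⟨1, fun i => i.elim0, Subsingleton.elim _ _⟩,
      fun _ => ⟨1 / 2, by norm_num, (hzero _ (by norm_num)).symm⟩⟩,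
      fun _ t ht => (hzero t ht).symm⟩
  have : NeZero n := ⟨hn.ne'⟩
  exact ⟨⟨fun ⟨t, ht, h⟩ =>
      exists_eq_smul_diagonal_conj_of_specRad_logConvexComb_eq hA hB hAirr hBirr ht h,
    fun ⟨E, hE, hBE⟩ => ⟨1 / 2, by norm_num,
      specRad_logConvexComb_of_eq_smul_diagonal_conj hA hAirr hE hBE _⟩⟩,
    fun ⟨E, hE, hBE⟩ t _ => specRad_logConvexComb_of_eq_smul_diagonal_conj hA hAirr hE hBE t⟩
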